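/- arXiv:2411.18361 — 6 statements merged into one kernel-verified Lean document; each statement's English description precedes it below -/
import Mathlib

section
/- Let X and X' be Banach spaces, F : X → X' a Fréchet differentiable map, x₀ ∈ X, and A : X' → X a bounded injective linear operator. Suppose Y₀, Z₁ ≥ 0 are constants and Z₂ : (0,∞) → [0,∞) is a function such that ‖A F(x₀)‖_X ≤ Y₀, ‖I − A ∘ DF(x₀)‖_{B(X)} ≤ Z₁, and ‖A ∘ (DF(c) − DF(x₀))‖_{B(X)} ≤ Z₂(r)·r for every r > 0 and every c in the closed ball of radius r centered at x₀. If there exists r₀ > 0 with Z₂(r₀)·r₀² − (1 − Z₁)·r₀ + Y₀ < 0, then there exists a unique x̃ in the closed ball of radius r₀ centered at x₀ satisfying F(x̃) = 0. -/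
/-- **Newton–Kantorovich theorem** (radii polynomial approach).
If `F : X → X'` is Fréchet differentiable between Banach spaces, `A : X' → X` is an
injective bounded linear operator, and the bounds `Y₀`, `Z₁`, `Z₂(r)·r` control
`‖A F(x₀)‖`, `‖I − A ∘ DF(x₀)‖` and `‖A ∘ (DF(c) − DF(x₀))‖` respectively, then the
negativity of the radii polynomial at some `r₀ > 0` yields a unique zero of `F` in the
closed ball of radius `r₀` around `x₀`. -/
theorem newton_kantorovich
    {X X' : Type*} [NormedAddCommGroup X] [NormedSpace ℝ X] [CompleteSpace X]
    [NormedAddCommGroup X'] [NormedSpace ℝ X'] [CompleteSpace X']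
    (F : X → X') (DF : X → X →L[ℝ] X') (hF : ∀ x, HasFDerivAt F (DF x) x)
    (x₀ : X) (A : X' →L[ℝ] X) (hA : Function.Injective A)
    (Y₀ Z₁ : ℝ) (hY₀ : 0 ≤ Y₀) (hZ₁ : 0 ≤ Z₁)
    (Z₂ : ℝ → ℝ) (hZ₂nonneg : ∀ r : ℝ, 0 < r → 0 ≤ Z₂ r)
    (hY : ‖A (F x₀)‖ ≤ Y₀)
    (hZ1 : ‖ContinuousLinearMap.id ℝ X - A.comp (DF x₀)‖ ≤ Z₁)
    (hZ2 : ∀ r : ℝ, 0 < r → ∀ c ∈ Metric.closedBall x₀ r,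
      ‖A.comp (DF c - DF x₀)‖ ≤ Z₂ r * r)
    (r₀ : ℝ) (hr₀ : 0 < r₀)
    (hp : Z₂ r₀ * r₀ ^ 2 - (1 - Z₁) * r₀ + Y₀ < 0) :
    ∃! x : X, x ∈ Metric.closedBall x₀ r₀ ∧ F x = 0 := by
  -- The Newton-like map
  set G : X → X := fun x => x - A (F x) with hG
  set κ : ℝ := Z₁ + Z₂ r₀ * r₀ with hκdef
  have hκ0 : 0 ≤ κ := add_nonneg hZ₁ (mul_nonneg (hZ₂nonneg r₀ hr₀) hr₀.le)
  have hκr : κ * r₀ + Y₀ < r₀ := by nlinarith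
  have hκ1 : κ < 1 := by nlinarith
  -- derivative of G
  have hGderiv : ∀ x : X, HasFDerivAt G (ContinuousLinearMap.id ℝ X - A.comp (DF x)) x := by
    intro x
    exact (hasFDerivAt_id x).sub (A.hasFDerivAt.comp x (hF x))
  -- derivative norm bound on ball
  have hbound : ∀ x ∈ Metric.closedBall x₀ r₀,
      ‖ContinuousLinearMap.id ℝ X - A.comp (DF x)‖ ≤ κ := by
    intro x hx
    have h1 : ContinuousLinearMap.id ℝ X - A.comp (DF x)
        = (ContinuousLinearMap.id ℝ X - A.comp (DF x₀)) - A.comp (DF x - DF x₀) := by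
      rw [ContinuousLinearMap.comp_sub]; abel
    rw [h1]
    calc ‖(ContinuousLinearMap.id ℝ X - A.comp (DF x₀)) - A.comp (DF x - DF x₀)‖
        ≤ ‖ContinuousLinearMap.id ℝ X - A.comp (DF x₀)‖ + ‖A.comp (DF x - DF x₀)‖ :=
          norm_sub_le _ _
      _ ≤ Z₁ + Z₂ r₀ * r₀ := add_le_add hZ1 (hZ2 r₀ hr₀ x hx)
  -- Lipschitz estimate on the ball
  have hlip : ∀ x ∈ Metric.closedBall x₀ r₀, ∀ y ∈ Metric.closedBall x₀ r₀,
      ‖G y - G x‖ ≤ κ * ‖y - x‖ := by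
    intro x hx y hy
    exact (convex_closedBall x₀ r₀).norm_image_sub_le_of_norm_hasFDerivWithin_le
      (fun z hz => (hGderiv z).hasFDerivWithinAt) hbound hx hy
  -- G maps the ball into itself
  have hmaps : ∀ x ∈ Metric.closedBall x₀ r₀, G x ∈ Metric.closedBall x₀ r₀ := by
    intro x hx
    rw [Metric.mem_closedBall, dist_eq_norm]
    have h1 : ‖G x - G x₀‖ ≤ κ * ‖x - x₀‖ :=
      hlip x₀ (Metric.mem_closedBall_self hr₀.le) x hx
    have h2 : ‖G x₀ - x₀‖ ≤ Y₀ := by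
      simpa [hG] using hY
    have hxd : ‖x - x₀‖ ≤ r₀ := by
      rw [Metric.mem_closedBall, dist_eq_norm] at hx; exact hx
    calc ‖G x - x₀‖ ≤ ‖G x - G x₀‖ + ‖G x₀ - x₀‖ := norm_sub_le_norm_sub_add_norm_sub _ _ _
      _ ≤ κ * r₀ + Y₀ := add_le_add (h1.trans (by nlinarith)) h2
      _ ≤ r₀ := hκr.le
  -- fixed point iff zero
  have hfix : ∀ x : X, G x = x ↔ F x = 0 := by
    intro x
    constructor
    · intro h
      have : A (F x) = 0 := by
        have := h; simp only [hG, sub_eq_self] at this; exact this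
      have : A (F x) = A 0 := by simpa using this
      exact hA this
    · intro h; simp [hG, h]
  -- contraction on the subtype
  haveI : CompleteSpace (Metric.closedBall x₀ r₀) :=
    Metric.isClosed_closedBall.completeSpace_coe
  haveI : Nonempty (Metric.closedBall x₀ r₀) :=
    ⟨⟨x₀, Metric.mem_closedBall_self hr₀.le⟩⟩
  set g : Metric.closedBall x₀ r₀ → Metric.closedBall x₀ r₀ :=
    fun p => ⟨G p.1, hmaps p.1 p.2⟩ with hg
  have hcontr : ContractingWith ⟨κ, hκ0⟩ g := by
    constructor
    · exact_mod_cast hκ1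
    · apply LipschitzWith.of_dist_le_mul
      intro a b
      have := hlip b.1 b.2 a.1 a.2
      simp [hg, Subtype.dist_eq, dist_eq_norm]; exact this
  set p := hcontr.fixedPoint g with hpdef
  have hpfix : g p = p := hcontr.fixedPoint_isFixedPt
  refine ⟨p.1, ⟨p.2, ?_⟩, ?_⟩
  · rw [← hfix]
    exact congrArg Subtype.val hpfix
  · rintro y ⟨hy, hy0⟩
    have : g ⟨y, hy⟩ = ⟨y, hy⟩ := by
      apply Subtype.ext
      exact (hfix y).mpr hy0
    have := hcontr.fixedPoint_unique' this hpfix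
    exact congrArg Subtype.val this
end

section
/- Let ω be a weight function on an open interval (a,b) (ω(x) > 0 on (a,b) and ω integrable), and let (p_n) be a sequence of real polynomials with deg p_n = n that are pairwise orthogonal with respect to ω, i.e. ∫_a^b p_n(x) p_m(x) ω(x) dx = 0 for n ≠ m, with W_n = ∫_a^b p_n(x)² ω(x) dx ≠ 0. Suppose x_0, …, x_N are the N+1 distinct roots of p_{N+1}, all lying in (a,b), and for each j let ω_j = ∫_a^b h_j(x) ω(x) dx, where h_j is the Lagrange basis polynomial of degree N with h_j(x_i) = δ_{ij}. Then every real polynomial f of degree at most N can be uniquely written as f(x) = Σ_{n=0}^N a_n p_n(x), and the coefficients are given by a_n = (1/W_n) Σ_{j=0}^N ω_j p_n(x_j) f(x_j) for n = 0, …, N. -/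
open Polynomial

lemma aux_indep (q : ℕ → Polynomial ℝ) (hq : ∀ n, (q n).degree = n) :
    ∀ (M : ℕ) (c : Fin M → ℝ), (∑ n : Fin M, c n • q (n : ℕ)) = 0 → ∀ n, c n = 0 := by
  intro M
  induction M with
  | zero => intro c _ n; exact n.elim0
  | succ M ih =>
    intro c hc
    have hqM0 : (q M).coeff M ≠ 0 := by
      have h1 : (q M).natDegree = M := natDegree_eq_of_degree_eq_some (hq M)
      have h2 : q M ≠ 0 := by
        intro h
        have h3 := hq M
        rw [h, degree_zero] at h3
        exact absurd h3 (by simp)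
      have h4 := mt leadingCoeff_eq_zero.mp h2
      rwa [leadingCoeff, h1] at h4
    rw [Fin.sum_univ_castSucc] at hc
    have hlast : c (Fin.last M) = 0 := by
      have hco := congrArg (fun g => Polynomial.coeff g M) hc
      simp only [coeff_add, finset_sum_coeff, coeff_smul, smul_eq_mul, coeff_zero] at hco
      have hz : ∀ i : Fin M, (q ((Fin.castSucc i) : ℕ)).coeff M = 0 := by
        intro i
        apply coeff_eq_zero_of_degree_lt
        rw [hq]
        exact_mod_cast i.2
      rw [Finset.sum_eq_zero (fun i _ => by rw [hz i, mul_zero])] at hco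
      simpa [hqM0] using hco
    rw [hlast, zero_smul, add_zero] at hc
    have hrest := ih (fun i => c (Fin.castSucc i)) hc
    intro n
    rcases Fin.eq_castSucc_or_eq_last n with ⟨i, rfl⟩ | rfl
    · exact hrest i
    · exact hlast

lemma aux_span (q : ℕ → Polynomial ℝ) (hq : ∀ n, (q n).degree = n) :
    ∀ (M : ℕ) (f : Polynomial ℝ), f.degree < (M : ℕ) →
      ∃ c : Fin M → ℝ, f = ∑ n : Fin M, c n • q (n : ℕ) := by
  intro M
  induction M with
  | zero =>
    intro f hf
    refine ⟨0, ?_⟩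
    have : f = 0 := by
      by_contra h0
      rw [degree_eq_natDegree h0] at hf
      exact absurd hf (by simp)
    simp [this]
  | succ M ih =>
    intro f hf
    have hqM0 : (q M).coeff M ≠ 0 := by
      have h1 : (q M).natDegree = M := natDegree_eq_of_degree_eq_some (hq M)
      have h2 : q M ≠ 0 := by
        intro h
        have h3 := hq M
        rw [h, degree_zero] at h3
        exact absurd h3 (by simp)
      have h4 := mt leadingCoeff_eq_zero.mp h2
      rwa [leadingCoeff, h1] at h4
    set t := f.coeff M / (q M).coeff M with ht
    have hg : (f - C t * q M).degree < (M : ℕ) := by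
      rw [degree_lt_iff_coeff_zero]
      intro k hk
      rcases eq_or_lt_of_le hk with rfl | hk'
      · simp only [coeff_sub, coeff_C_mul, ht]
        field_simp
        ring
      · have hk2 : (M : ℕ) + 1 ≤ k := by exact_mod_cast hk'
        rw [coeff_sub, coeff_eq_zero_of_degree_lt, coeff_eq_zero_of_degree_lt, sub_zero]
        · calc (C t * q M).degree ≤ 0 + (M : ℕ) := degree_mul_le_of_le degree_C_le (hq M).le
            _ < k := by rw [zero_add]; exact_mod_cast lt_of_lt_of_le (Nat.lt_succ_self M) hk2
        · exact lt_of_lt_of_le hf (by exact_mod_cast hk2)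
    obtain ⟨c', hc'⟩ := ih (f - C t * q M) hg
    refine ⟨Fin.snoc c' t, ?_⟩
    rw [Fin.sum_univ_castSucc]
    simp only [Fin.snoc_castSucc, Fin.snoc_last, Fin.val_last, Fin.coe_castSucc]
    rw [← hc', smul_eq_C_mul]
    ring

open MeasureTheory

/-- **iMMT matrix via Gaussian quadrature.**
Let `ω` be a positive integrable weight on the open interval `S = (a,b)`
(with `-∞ ≤ a < b ≤ ∞`), and let `(p_n)` be polynomials with `deg p_n = n` that are
pairwise orthogonal with respect to `ω`, with `W_n = ∫ p_n² ω ≠ 0`.  If `x_0, …, x_N`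
are the `N+1` distinct roots of `p_{N+1}`, all lying in `(a,b)`, and
`ω_j = ∫ h_j ω` for the Lagrange basis polynomials `h_j`, then every polynomial `f` of
degree at most `N` is uniquely `f = Σ_n a_n p_n`, with
`a_n = (1/W_n) Σ_j ω_j p_n(x_j) f(x_j)`. -/
theorem immt_gaussian_quadrature
    (a b : EReal) (hab : a < b)
    (S : Set ℝ) (hS : S = {x : ℝ | a < (x : EReal) ∧ (x : EReal) < b})
    (ω : ℝ → ℝ) (hω_pos : ∀ x ∈ S, 0 < ω x) (hω_int : IntegrableOn ω S)
    (p : ℕ → Polynomial ℝ) (hdeg : ∀ n : ℕ, (p n).degree = (n : ℕ))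
    (horth : ∀ n m : ℕ, n ≠ m → ∫ x in S, (p n).eval x * (p m).eval x * ω x = 0)
    (W : ℕ → ℝ) (hW : ∀ n : ℕ, W n = ∫ x in S, (p n).eval x ^ 2 * ω x)
    (hWne : ∀ n : ℕ, W n ≠ 0)
    (N : ℕ)
    (xs : Fin (N + 1) → ℝ) (hxs_inj : Function.Injective xs)
    (hxs_mem : ∀ j, xs j ∈ S)
    (hxs_root : ∀ j, (p (N + 1)).eval (xs j) = 0)
    (wq : Fin (N + 1) → ℝ)
    (hwq : ∀ j, wq j = ∫ x in S, (Lagrange.basis Finset.univ xs j).eval x * ω x)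
    (f : Polynomial ℝ) (hf : f.degree ≤ (N : ℕ)) :
    (∃! c : Fin (N + 1) → ℝ,
        ∀ x : ℝ, f.eval x = ∑ n : Fin (N + 1), c n * (p (n : ℕ)).eval x) ∧
    (∀ c : Fin (N + 1) → ℝ,
        (∀ x : ℝ, f.eval x = ∑ n : Fin (N + 1), c n * (p (n : ℕ)).eval x) →
        ∀ n : Fin (N + 1),
          c n = (1 / W (n : ℕ)) *
            ∑ j : Fin (N + 1), wq j * (p (n : ℕ)).eval (xs j) * f.eval (xs j)) := by
  classical
  have hSm : MeasurableSet S := by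
    rw [hS]
    exact measurable_coe_real_ereal measurableSet_Ioo
  have hωm : AEStronglyMeasurable ω (volume.restrict S) := hω_int.aestronglyMeasurable
  have hωae : ∀ᵐ x ∂(volume.restrict S), 0 ≤ ω x := by
    filter_upwards [ae_restrict_mem hSm] with x hx
    exact (hω_pos x hx).le
  have hInt2 : ∀ n, IntegrableOn (fun x => (p n).eval x ^ 2 * ω x) S := by
    intro n
    by_contra h
    exact hWne n (by rw [hW n, MeasureTheory.integral_undef h])
  have hIntpm : ∀ n m, IntegrableOn (fun x => (p n).eval x * (p m).eval x * ω x) S := by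
    intro n m
    have hdom : Integrable
        (fun x => (1/2 : ℝ) * ((p n).eval x ^ 2 * ω x + (p m).eval x ^ 2 * ω x))
        (volume.restrict S) := ((hInt2 n).add (hInt2 m)).const_mul _
    refine hdom.mono ?_ ?_
    · exact (((p n).continuous.mul (p m).continuous).aestronglyMeasurable.mul hωm)
    · filter_upwards [hωae] with x hx
      rw [Real.norm_eq_abs, Real.norm_eq_abs]
      set u := (p n).eval x
      set v := (p m).eval x
      have h2 : |u * v| ≤ (u ^ 2 + v ^ 2) / 2 := by
        nlinarith [sq_nonneg (|u| - |v|), sq_abs u, sq_abs v, abs_mul u v,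
          abs_nonneg u, abs_nonneg v]
      calc |u * v * ω x| = |u * v| * ω x := by rw [abs_mul, abs_of_nonneg hx]
        _ ≤ ((u ^ 2 + v ^ 2) / 2) * ω x := mul_le_mul_of_nonneg_right h2 hx
        _ = 1/2 * (u ^ 2 * ω x + v ^ 2 * ω x) := by ring
        _ ≤ |1/2 * (u ^ 2 * ω x + v ^ 2 * ω x)| := le_abs_self _
  have hqdeg : ∀ n : ℕ, (p n * p 0).degree = (n : ℕ) := by
    intro n
    rw [Polynomial.degree_mul, hdeg, hdeg]
    simp
  have hIntg : ∀ g : Polynomial ℝ, IntegrableOn (fun x => g.eval x * ω x) S := by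
    intro g
    obtain ⟨c, hc⟩ := aux_span _ hqdeg (g.natDegree + 1) g
      (lt_of_le_of_lt Polynomial.degree_le_natDegree (by exact_mod_cast Nat.lt_succ_self _))
    have hfe : (fun x => g.eval x * ω x)
        = fun x => ∑ n : Fin (g.natDegree + 1),
            c n * ((p (n : ℕ)).eval x * (p 0).eval x * ω x) := by
      funext x
      conv_lhs => rw [hc]
      simp only [Polynomial.eval_finset_sum, Polynomial.eval_smul, smul_eq_mul,
        Finset.sum_mul, Polynomial.eval_mul]
      exact Finset.sum_congr rfl fun n _ => by ring
    rw [hfe]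
    exact integrable_finset_sum _ (fun n _ => (hIntpm _ _).const_mul _)
  have hIntOrth : ∀ g : Polynomial ℝ, g.degree < ((N + 1 : ℕ) : WithBot ℕ) →
      ∫ x in S, g.eval x * (p (N + 1)).eval x * ω x = 0 := by
    intro g hg
    obtain ⟨c, hc⟩ := aux_span p hdeg (N + 1) g hg
    have hfe : (fun x => g.eval x * (p (N + 1)).eval x * ω x)
        = fun x => ∑ n : Fin (N + 1),
            c n * ((p (n : ℕ)).eval x * (p (N + 1)).eval x * ω x) := by
      funext x
      conv_lhs => rw [hc]
      simp only [Polynomial.eval_finset_sum, Polynomial.eval_smul, smul_eq_mul,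
        Finset.sum_mul]
      exact Finset.sum_congr rfl fun n _ => by ring
    rw [hfe, integral_finset_sum _ (fun n _ => (hIntpm _ _).const_mul _)]
    refine Finset.sum_eq_zero fun n _ => ?_
    rw [MeasureTheory.integral_const_mul, horth (n : ℕ) (N + 1) (Nat.ne_of_lt n.2), mul_zero]
  -- factorization of p (N+1)
  have hpN0 : p (N + 1) ≠ 0 := by
    intro h
    have h3 := hdeg (N + 1)
    rw [h, Polynomial.degree_zero] at h3
    exact WithBot.bot_ne_coe (α := ℕ) (a := N + 1) (by exact_mod_cast h3)
  set lc := (p (N + 1)).leadingCoeff with hlc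
  have hlcne : lc ≠ 0 := Polynomial.leadingCoeff_ne_zero.mpr hpN0
  set m : Polynomial ℝ := ∏ j : Fin (N + 1), (Polynomial.X - Polynomial.C (xs j)) with hm
  have hmonic : m.Monic :=
    Polynomial.monic_prod_of_monic _ _ fun j _ => Polynomial.monic_X_sub_C _
  have hmdeg : m.natDegree = N + 1 := by
    rw [hm, Polynomial.natDegree_prod _ _ (fun j _ => Polynomial.X_sub_C_ne_zero _)]
    simp [Polynomial.natDegree_X_sub_C]
  have hmeval : ∀ j, m.eval (xs j) = 0 := by
    intro j
    rw [hm, Polynomial.eval_prod]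
    exact Finset.prod_eq_zero (Finset.mem_univ j) (by simp)
  have hinjOn : Set.InjOn xs (Finset.univ : Finset (Fin (N + 1))) := hxs_inj.injOn
  have hcard : (Finset.univ : Finset (Fin (N + 1))).card = N + 1 := by simp
  have hfact : p (N + 1) = Polynomial.C lc * m := by
    have hd : (p (N + 1) - Polynomial.C lc * m).degree < ((N + 1 : ℕ) : WithBot ℕ) := by
      rw [Polynomial.degree_lt_iff_coeff_zero]
      intro k hk
      rcases eq_or_lt_of_le hk with rfl | hk2
      · rw [Polynomial.coeff_sub, Polynomial.coeff_C_mul]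
        have h1 : (p (N + 1)).coeff (N + 1) = lc := by
          rw [hlc, Polynomial.leadingCoeff,
            Polynomial.natDegree_eq_of_degree_eq_some (hdeg (N + 1))]
        have h2 : m.coeff (N + 1) = 1 := by rw [← hmdeg]; exact hmonic.coeff_natDegree
        rw [h1, h2, mul_one, sub_self]
      · have hk2' : N + 1 < k := hk2
        rw [Polynomial.coeff_sub, Polynomial.coeff_eq_zero_of_degree_lt,
          Polynomial.coeff_eq_zero_of_degree_lt, sub_zero]
        · refine lt_of_le_of_lt (Polynomial.degree_mul_le _ _) ?_
          calc (Polynomial.C lc).degree + m.degree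
              ≤ 0 + ((N + 1 : ℕ) : WithBot ℕ) :=
                add_le_add Polynomial.degree_C_le
                  (Polynomial.degree_le_natDegree.trans (by rw [hmdeg]))
            _ < k := by rw [zero_add]; exact_mod_cast hk2'
        · rw [hdeg]; exact_mod_cast hk2'
    have hz : p (N + 1) - Polynomial.C lc * m = 0 :=
      Polynomial.eq_zero_of_degree_lt_of_eval_index_eq_zero _ hinjOn
        (by rw [hcard]; exact hd)
        (fun j _ => by simp [hxs_root j, hmeval j])
    exact sub_eq_zero.mp hz
  -- Gaussian quadrature exactness
  have quad : ∀ g : Polynomial ℝ, g.natDegree ≤ 2 * N + 1 →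
      ∫ x in S, g.eval x * ω x = ∑ j : Fin (N + 1), wq j * g.eval (xs j) := by
    intro g hgdeg
    set r := g %ₘ m with hrdef
    set q := g /ₘ m with hqdef
    have hgeq : g = r + m * q := (Polynomial.modByMonic_add_div g m).symm
    have hrdeg : r.degree < ((N + 1 : ℕ) : WithBot ℕ) := by
      have h := Polynomial.degree_modByMonic_lt g hmonic
      rwa [Polynomial.degree_eq_natDegree hmonic.ne_zero, hmdeg] at h
    have hqdeg2 : q.degree < ((N + 1 : ℕ) : WithBot ℕ) := by
      have h1 : q.natDegree = g.natDegree - (N + 1) := by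
        rw [hqdef, Polynomial.natDegree_divByMonic g hmonic, hmdeg]
      have h2 : q.natDegree ≤ N := by omega
      have h3 : ((q.natDegree : ℕ) : WithBot ℕ) ≤ ((N : ℕ) : WithBot ℕ) := by
        exact_mod_cast h2
      have h4 : ((N : ℕ) : WithBot ℕ) < ((N + 1 : ℕ) : WithBot ℕ) := by
        exact_mod_cast Nat.lt_succ_self N
      exact lt_of_le_of_lt (Polynomial.degree_le_natDegree.trans h3) h4
    have hfe : (fun x => g.eval x * ω x)
        = fun x => r.eval x * ω x + (m * q).eval x * ω x := by
      funext x
      conv_lhs => rw [hgeq]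
      rw [Polynomial.eval_add, add_mul]
    have hsplit : ∫ x in S, g.eval x * ω x
        = (∫ x in S, r.eval x * ω x) + ∫ x in S, (m * q).eval x * ω x := by
      rw [hfe]
      exact MeasureTheory.integral_add (hIntg r) (hIntg (m * q))
    have hmq0 : ∫ x in S, (m * q).eval x * ω x = 0 := by
      have hfe2 : (fun x => (m * q).eval x * ω x)
          = fun x => lc⁻¹ * (q.eval x * (p (N + 1)).eval x * ω x) := by
        funext x
        have h3 : (p (N + 1)).eval x = lc * m.eval x := by
          rw [hfact, Polynomial.eval_mul, Polynomial.eval_C]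
        rw [Polynomial.eval_mul, h3]
        field_simp
      rw [hfe2, MeasureTheory.integral_const_mul, hIntOrth q hqdeg2, mul_zero]
    have hr_interp : r = ∑ j : Fin (N + 1),
        Polynomial.C (r.eval (xs j)) * Lagrange.basis Finset.univ xs j := by
      have h := Lagrange.eq_interpolate hinjOn (by rw [hcard]; exact hrdeg)
      rwa [Lagrange.interpolate_apply] at h
    have hrint : ∫ x in S, r.eval x * ω x = ∑ j : Fin (N + 1), wq j * r.eval (xs j) := by
      have hfe3 : (fun x => r.eval x * ω x)
          = fun x => ∑ j : Fin (N + 1),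
              r.eval (xs j) * ((Lagrange.basis Finset.univ xs j).eval x * ω x) := by
        funext x
        conv_lhs => rw [hr_interp]
        simp only [Polynomial.eval_finset_sum, Polynomial.eval_mul, Polynomial.eval_C,
          Finset.sum_mul]
        exact Finset.sum_congr rfl fun j _ => by ring
      rw [hfe3, integral_finset_sum _ (fun j _ => (hIntg _).const_mul _)]
      refine Finset.sum_congr rfl fun j _ => ?_
      rw [MeasureTheory.integral_const_mul, ← hwq j]
      ring
    have hgr : ∀ j, g.eval (xs j) = r.eval (xs j) := by
      intro j
      conv_lhs => rw [hgeq]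
      simp [hmeval j]
    rw [hsplit, hmq0, add_zero, hrint]
    exact Finset.sum_congr rfl fun j _ => by rw [hgr j]
  -- key computation
  have key : ∀ (c : Fin (N + 1) → ℝ),
      (∀ x, f.eval x = ∑ n : Fin (N + 1), c n * (p (n : ℕ)).eval x) →
      ∀ n : Fin (N + 1),
        (∑ j : Fin (N + 1), wq j * (p (n : ℕ)).eval (xs j) * f.eval (xs j))
          = c n * W (n : ℕ) := by
    intro c hc n
    have hfn : f.natDegree ≤ N := Polynomial.natDegree_le_iff_degree_le.mpr hf
    have hgd : (p (n : ℕ) * f).natDegree ≤ 2 * N + 1 := by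
      refine le_trans Polynomial.natDegree_mul_le ?_
      have h1 : (p (n : ℕ)).natDegree = (n : ℕ) :=
        Polynomial.natDegree_eq_of_degree_eq_some (hdeg _)
      have h2 := n.2
      omega
    have h1 : (∑ j : Fin (N + 1), wq j * (p (n : ℕ)).eval (xs j) * f.eval (xs j))
        = ∑ j : Fin (N + 1), wq j * (p (n : ℕ) * f).eval (xs j) :=
      Finset.sum_congr rfl fun j _ => by rw [Polynomial.eval_mul]; ring
    rw [h1, ← quad _ hgd]
    have hfe : (fun x => (p (n : ℕ) * f).eval x * ω x)
        = fun x => ∑ m' : Fin (N + 1),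
            c m' * ((p (n : ℕ)).eval x * (p (m' : ℕ)).eval x * ω x) := by
      funext x
      rw [Polynomial.eval_mul, hc x, Finset.mul_sum, Finset.sum_mul]
      exact Finset.sum_congr rfl fun m' _ => by ring
    rw [hfe, integral_finset_sum _ (fun m' _ => (hIntpm _ _).const_mul _)]
    rw [Finset.sum_eq_single n]
    · rw [MeasureTheory.integral_const_mul]
      congr 1
      rw [hW (n : ℕ)]
      have : (fun x => (p (n : ℕ)).eval x * (p (n : ℕ)).eval x * ω x)
          = fun x => (p (n : ℕ)).eval x ^ 2 * ω x := funext fun x => by ring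
      rw [this]
    · intro m' _ hm'
      rw [MeasureTheory.integral_const_mul,
        horth _ _ (fun h => hm' (Fin.val_injective h).symm), mul_zero]
    · intro h
      exact absurd (Finset.mem_univ n) h
  -- assembling
  have hflt : f.degree < ((N + 1 : ℕ) : WithBot ℕ) :=
    lt_of_le_of_lt hf (by exact_mod_cast Nat.lt_succ_self N)
  obtain ⟨c₀, hc₀⟩ := aux_span p hdeg (N + 1) f hflt
  have hc₀' : ∀ x, f.eval x = ∑ n : Fin (N + 1), c₀ n * (p (n : ℕ)).eval x := by
    intro x
    conv_lhs => rw [hc₀]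
    simp [Polynomial.eval_finset_sum, Polynomial.eval_smul]
  constructor
  · refine ⟨c₀, hc₀', ?_⟩
    intro y hy
    have hz : (∑ n : Fin (N + 1), (y n - c₀ n) • p (n : ℕ)) = 0 := by
      apply Polynomial.funext
      intro x
      simp only [Polynomial.eval_finset_sum, Polynomial.eval_smul, smul_eq_mul,
        Polynomial.eval_zero, sub_mul]
      rw [Finset.sum_sub_distrib, ← hy x, ← hc₀' x, sub_self]
    have hall := aux_indep p hdeg (N + 1) _ hz
    funext n
    have h := hall n
    linarith
  · intro c hc n
    rw [key c hc n, one_div, inv_mul_eq_div, eq_div_iff (hWne _)]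
end

section
/- Let α_i = (i+2)/(2(i+1)) and β_i = i/(2i+2) for i ∈ ℕ. Let (f_j)_{j∈ℕ} be a real sequence with Σ_j |f_j| < ∞. For each i ∈ ℕ define x_i = Σ_{j=i}^∞ (−1)^{i+j} · 2(i+1)²/((j+1)(j+2)) · f_j; this series converges absolutely. Then α_i x_i + β_{i+1} x_{i+1} = f_i for every i ∈ ℕ. (The numbers α_i and β_{i+1} are respectively the diagonal and superdiagonal entries of the upper bidiagonal matrix representing the operator R⁺_{0,1}, so x is an explicit preimage of f under R⁺_{0,1}.) -/
/-- The `(i,j)` entry `(−1)^{i+j}·2(i+1)²/((j+1)(j+2))` (for `j ≥ i`, else `0`) of the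
upper triangular matrix representing the inverse of `R⁺_{0,1}`. -/
noncomputable def invRentry (i j : ℕ) : ℝ :=
  if i ≤ j then (-1 : ℝ) ^ (i + j) * (2 * ((i : ℝ) + 1) ^ 2 / (((j : ℝ) + 1) * ((j : ℝ) + 2)))
  else 0

lemma invR_key (f : ℕ → ℝ) (i j : ℕ) :
    (((i : ℝ) + 2) / (2 * ((i : ℝ) + 1))) * (invRentry i j * f j)
      + (((i : ℝ) + 1) / (2 * ((i : ℝ) + 1) + 2)) * (invRentry (i + 1) j * f j)
      = if j = i then f i else 0 := by
  have h1 : ((j : ℝ) + 1) ≠ 0 := by positivity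
  have h2 : ((j : ℝ) + 2) ≠ 0 := by positivity
  have h3 : ((i : ℝ) + 1) ≠ 0 := by positivity
  have h4 : ((i : ℝ) + 2) ≠ 0 := by positivity
  unfold invRentry
  rcases lt_trichotomy j i with h | h | h
  · rw [if_neg (by omega), if_neg (by omega), if_neg (by omega)]
    simp
  · subst h
    rw [if_pos le_rfl, if_neg (by omega), if_pos rfl]
    have hpow : (-1 : ℝ) ^ (j + j) = 1 := by
      rw [show j + j = 2 * j by ring, pow_mul, neg_one_sq, one_pow]
    rw [hpow]
    field_simp
    ring
  · rw [if_pos (by omega), if_pos (by omega), if_neg (by omega)]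
    have hpow : (-1 : ℝ) ^ (i + 1 + j) = -(-1 : ℝ) ^ (i + j) := by
      rw [show i + 1 + j = (i + j) + 1 by ring, pow_succ]; ring
    rw [hpow]
    push_cast
    field_simp
    ring

/-- Given an absolutely summable sequence `f`, the sequence
`x_i = Σ_{j≥i} (−1)^{i+j}·2(i+1)²/((j+1)(j+2))·f_j` is given by absolutely convergent
series and satisfies `α_i x_i + β_{i+1} x_{i+1} = f_i` for all `i`, where
`α_i = (i+2)/(2(i+1))` and `β_i = i/(2i+2)`; i.e. `x` is a preimage of `f` under
`R⁺_{0,1}`. -/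
theorem invR_solves (f : ℕ → ℝ) (hf : Summable fun j => |f j|)
    (x : ℕ → ℝ) (hx : ∀ i : ℕ, x i = ∑' j : ℕ, invRentry i j * f j) :
    (∀ i : ℕ, Summable fun j : ℕ => |invRentry i j * f j|) ∧
    (∀ i : ℕ,
      (((i : ℝ) + 2) / (2 * ((i : ℝ) + 1))) * x i +
        (((i : ℝ) + 1) / (2 * ((i : ℝ) + 1) + 2)) * x (i + 1) = f i) := by
  have hsum : ∀ i : ℕ, Summable fun j : ℕ => |invRentry i j * f j| := by
    intro i
    refine Summable.of_nonneg_of_le (f := fun j => 2 * ((i : ℝ) + 1) ^ 2 * |f j|)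
      (fun j => abs_nonneg _) (fun j => ?_) (hf.mul_left _)
    · rw [abs_mul]
      apply mul_le_mul_of_nonneg_right _ (abs_nonneg _)
      unfold invRentry
      split_ifs with h
      · rw [abs_mul, abs_pow, abs_neg, abs_one, one_pow, one_mul,
          abs_of_nonneg (by positivity)]
        apply div_le_self (by positivity)
        nlinarith [Nat.cast_nonneg (α := ℝ) j]
      · simp; positivity
  refine ⟨hsum, fun i => ?_⟩
  have s1 : Summable fun j => invRentry i j * f j := (hsum i).of_abs
  have s2 : Summable fun j => invRentry (i + 1) j * f j := (hsum (i + 1)).of_abs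
  rw [hx i, hx (i + 1), ← tsum_mul_left, ← tsum_mul_left,
    ← Summable.tsum_add (s1.mul_left _) (s2.mul_left _),
    tsum_congr (fun j => invR_key f i j)]
  exact tsum_ite_eq i (fun _ => f i)
end

section
/- Let (f_j)_{j∈ℕ} be a real sequence with Σ_j |f_j| < ∞, and define x_i = Σ_{j=i}^∞ (−1)^{i+j} · 2(i+1)²/((j+1)(j+2)) · f_j for each i ∈ ℕ. Then Σ_{i=0}^∞ |x_i|/(2i+2) ≤ (1/2) · Σ_{j=0}^∞ |f_j|. (This is the operator-norm bound ‖(R⁺_{0,1})^{-1}‖ ≤ 1/2 from the weighted ℓ¹ space with weights 1 to the weighted ℓ¹ space with weights (2i+2)^{-1}.) -/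
lemma abs_invRentry (i j : ℕ) (h : i ≤ j) :
    |invRentry i j| = 2 * ((i : ℝ) + 1) ^ 2 / (((j : ℝ) + 1) * ((j : ℝ) + 2)) := by
  rw [invRentry, if_pos h, abs_mul, abs_pow, abs_neg, abs_one, one_pow, one_mul,
    abs_of_nonneg (by positivity)]

lemma abs_invRentry_le (i j : ℕ) : |invRentry i j| ≤ 2 * ((i : ℝ) + 1) ^ 2 := by
  by_cases h : i ≤ j
  · rw [abs_invRentry i j h]
    apply div_le_self (by positivity)
    nlinarith [Nat.cast_nonneg (α := ℝ) j]
  · rw [invRentry, if_neg h, abs_zero]; positivity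

lemma gauss_sum_real (n : ℕ) :
    ∑ i ∈ Finset.range n, ((i : ℝ) + 1) = (n : ℝ) * ((n : ℝ) + 1) / 2 := by
  induction n with
  | zero => simp
  | succ n ih => rw [Finset.sum_range_succ, ih]; push_cast; ring

/-- **Operator norm bound** `‖(R⁺_{0,1})^{-1}‖ ≤ 1/2`: for absolutely summable `f` and
`x_i = Σ_{j≥i} (−1)^{i+j}·2(i+1)²/((j+1)(j+2))·f_j`, one has
`Σ_i |x_i|/(2i+2) ≤ (1/2)·Σ_j |f_j|`. -/
theorem invR_norm_bound (f : ℕ → ℝ) (hf : Summable fun j => |f j|)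
    (x : ℕ → ℝ) (hx : ∀ i : ℕ, x i = ∑' j : ℕ, invRentry i j * f j) :
    ∑' i : ℕ, |x i| / (2 * (i : ℝ) + 2) ≤ (1 / 2) * ∑' j : ℕ, |f j| := by
  set g : ℕ → ℕ → ℝ := fun i j => |invRentry i j| * |f j| / (2 * (i : ℝ) + 2) with hgdef
  have hg_nonneg : ∀ i j, 0 ≤ g i j := fun i j => by positivity
  have hipos : ∀ i : ℕ, (0 : ℝ) < 2 * (i : ℝ) + 2 := fun i => by positivity
  have hione : ∀ i : ℕ, (1 : ℝ) ≤ 2 * (i : ℝ) + 2 := fun i => by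
    nlinarith [Nat.cast_nonneg (α := ℝ) i]
  -- summability in j for each fixed i
  have hrow_abs : ∀ i, Summable fun j => |invRentry i j * f j| := by
    intro i
    apply Summable.of_nonneg_of_le (fun j => abs_nonneg _) _ (hf.mul_left (2 * ((i : ℝ) + 1) ^ 2))
    intro j
    rw [abs_mul]
    exact mul_le_mul_of_nonneg_right (abs_invRentry_le i j) (abs_nonneg _)
  -- column sums: finite support, value |f j| / 2
  have hcol_supp : ∀ j, ∀ i ∉ Finset.range (j + 1), g i j = 0 := by
    intro j i hi
    rw [Finset.mem_range, Nat.lt_succ_iff] at hi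
    simp only [hgdef, invRentry, if_neg hi, abs_zero, zero_mul, zero_div]
  have hcol : ∀ j, ∑' i, g i j = |f j| / 2 := by
    intro j
    rw [tsum_eq_sum (hcol_supp j)]
    have hj1 : ((j : ℝ) + 1) ≠ 0 := by positivity
    have hj2 : ((j : ℝ) + 2) ≠ 0 := by positivity
    have heq : ∀ i ∈ Finset.range (j + 1),
        g i j = ((i : ℝ) + 1) * (|f j| / (((j : ℝ) + 1) * ((j : ℝ) + 2))) := by
      intro i hi
      rw [Finset.mem_range, Nat.lt_succ_iff] at hi
      have hi2 : (2 : ℝ) * (i : ℝ) + 2 ≠ 0 := ne_of_gt (hipos i)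
      simp only [hgdef]
      rw [abs_invRentry i j hi]
      field_simp
    rw [Finset.sum_congr rfl heq, ← Finset.sum_mul, gauss_sum_real (j + 1)]
    push_cast
    field_simp
    ring
  have hcol_summable : ∀ j, Summable fun i => g i j := fun j =>
    summable_of_ne_finset_zero (hcol_supp j)
  have hcolsum_summable : Summable fun j => ∑' i, g i j := by
    simp only [hcol]; exact hf.div_const 2
  -- summability of the uncurried function (column-major), then row-major via swap
  have hF : Summable (Function.uncurry fun j i => g i j) :=
    (summable_prod_of_nonneg (fun p => hg_nonneg p.2 p.1)).2
      ⟨hcol_summable, hcolsum_summable⟩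
  have hF' : Summable (Function.uncurry fun i j => g i j) := hF.prod_symm
  have hrowsum_summable : Summable fun i => ∑' j, g i j := hF'.prod
  -- Fubini
  have hswap : ∑' i, ∑' j, g i j = ∑' j, ∑' i, g i j :=
    (Summable.tsum_comm (f := fun j i => g i j) hF)
  -- pointwise bound : |x i| / (2i+2) ≤ ∑' j, g i j
  have hpt : ∀ i, |x i| / (2 * (i : ℝ) + 2) ≤ ∑' j, g i j := by
    intro i
    have hxb : |x i| ≤ ∑' j, |invRentry i j * f j| := by
      rw [hx i]
      simpa only [Real.norm_eq_abs] using norm_tsum_le_tsum_norm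
        (f := fun j => invRentry i j * f j)
        (by simpa only [Real.norm_eq_abs] using hrow_abs i)
    have : (∑' j, |invRentry i j * f j|) / (2 * (i : ℝ) + 2) = ∑' j, g i j := by
      rw [← tsum_div_const]
      exact tsum_congr fun j => by rw [hgdef]; simp only [abs_mul]
    rw [← this]
    gcongr
  -- assemble
  have hLHS_summable : Summable fun i => |x i| / (2 * (i : ℝ) + 2) :=
    Summable.of_nonneg_of_le (fun i => by positivity) hpt hrowsum_summable
  calc ∑' i : ℕ, |x i| / (2 * (i : ℝ) + 2)
      ≤ ∑' i, ∑' j, g i j := Summable.tsum_le_tsum hpt hLHS_summable hrowsum_summable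
    _ = ∑' j, ∑' i, g i j := hswap
    _ = ∑' j, |f j| / 2 := tsum_congr hcol
    _ = (1 / 2) * ∑' j : ℕ, |f j| := by rw [tsum_div_const]; ring
end

section
/- Fix integers m ≥ 0 and N ≥ 0. Let T : ℓ¹(ℕ,ℝ) → ℓ¹(ℕ,ℝ) be the bounded linear operator determined on the standard basis vectors by T e_0 = e_1/(4(m+1)(m+2)) − e_0/(4(m+1)(m+2)) and, for n ≥ 1, T e_n = e_{n+1}/(4(2n+m+1)(2n+m+2)) − e_n/(2(2n+m+2)(2n+m)) + e_{n-1}/(4(2n+m)(2n+m+1)). Let π^∞ : ℓ¹(ℕ,ℝ) → ℓ¹(ℕ,ℝ) be the projection that sets to zero all coordinates with index ≤ N. Then the ℓ¹ operator norm of π^∞ ∘ T is at most 1/(2(N+1)+m)². -/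
open scoped ENNReal

set_option maxHeartbeats 1000000

private lemma col_bound (A : lp (fun _ : ℕ => ℝ) 1 →L[ℝ] lp (fun _ : ℕ => ℝ) 1)
    {C : ℝ} (hC : 0 ≤ C) (h : ∀ n : ℕ, ‖A (lp.single 1 n 1)‖ ≤ C) : ‖A‖ ≤ C := by
  haveI : Fact ((1:ℝ≥0∞) ≤ 1) := ⟨le_rfl⟩
  refine A.opNorm_le_bound hC fun x => ?_
  have h1 : HasSum (fun n : ℕ => lp.single 1 n ((x : ∀ _ : ℕ, ℝ) n)) x :=
    lp.hasSum_single (by norm_num) x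
  have h2 : HasSum (fun n : ℕ => A (lp.single 1 n ((x : ∀ _ : ℕ, ℝ) n))) (A x) := h1.mapL A
  have hx : Summable fun n : ℕ => ‖(x : ∀ _ : ℕ, ℝ) n‖ := by
    simpa using (lp.memℓp x).summable (p := (1:ℝ≥0∞)) (by norm_num)
  have hnorm : ‖x‖ = ∑' n : ℕ, ‖(x : ∀ _ : ℕ, ℝ) n‖ := by
    simpa using lp.norm_eq_tsum_rpow (p := (1:ℝ≥0∞)) (by norm_num) x
  have key : ∀ n : ℕ, ‖A (lp.single 1 n ((x : ∀ _ : ℕ, ℝ) n))‖ ≤ C * ‖(x : ∀ _ : ℕ, ℝ) n‖ := by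
    intro n
    have hs : lp.single (E := fun _ : ℕ => ℝ) 1 n ((x : ∀ _ : ℕ, ℝ) n) =
        ((x : ∀ _ : ℕ, ℝ) n) • lp.single (E := fun _ : ℕ => ℝ) 1 n (1:ℝ) := by
      have := lp.single_smul (E := fun _ : ℕ => ℝ) 1 n ((x : ∀ _ : ℕ, ℝ) n) (1:ℝ)
      rw [smul_eq_mul, mul_one] at this
      exact this
    rw [hs, map_smul, norm_smul, mul_comm]
    exact mul_le_mul (h n) le_rfl (norm_nonneg _) hC
  have hsum : Summable fun n : ℕ => ‖A (lp.single 1 n ((x : ∀ _ : ℕ, ℝ) n))‖ :=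
    Summable.of_nonneg_of_le (fun _ => norm_nonneg _) key (hx.mul_left C)
  calc ‖A x‖ = ‖∑' n : ℕ, A (lp.single 1 n ((x : ∀ _ : ℕ, ℝ) n))‖ := by rw [h2.tsum_eq]
    _ ≤ ∑' n : ℕ, ‖A (lp.single 1 n ((x : ∀ _ : ℕ, ℝ) n))‖ := norm_tsum_le_tsum_norm hsum
    _ ≤ ∑' n : ℕ, C * ‖(x : ∀ _ : ℕ, ℝ) n‖ := Summable.tsum_le_tsum key hsum (hx.mul_left C)
    _ = C * ‖x‖ := by rw [tsum_mul_left, hnorm]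

private lemma arith1 {u y : ℝ} (hu : 2 ≤ u) (hy : 2 ≤ y) (hyu : y ≤ u) :
    1 / (4 * (u + 1) * (u + 2)) + 1 / (2 * (u + 2) * u) + 1 / (4 * u * (u + 1)) ≤ 1 / y ^ 2 := by
  have hy0 : (0:ℝ) < y := by linarith
  have hu0 : (0:ℝ) < u := by linarith
  have hsq : y ^ 2 ≤ u ^ 2 := by nlinarith
  have h1a : 1 / (4 * (u + 1) * (u + 2)) ≤ 1 / (4 * y ^ 2) := by
    rw [div_le_div_iff₀ (by positivity) (by positivity)]; nlinarith
  have h1b : 1 / (2 * (u + 2) * u) ≤ 1 / (2 * y ^ 2) := by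
    rw [div_le_div_iff₀ (by positivity) (by positivity)]; nlinarith
  have h1d : 1 / (4 * u * (u + 1)) ≤ 1 / (4 * y ^ 2) := by
    rw [div_le_div_iff₀ (by positivity) (by positivity)]; nlinarith
  have hsum : 1 / (4 * y ^ 2) + 1 / (2 * y ^ 2) + 1 / (4 * y ^ 2) = 1 / y ^ 2 := by
    field_simp; ring
  linarith

private lemma arith3 {u y : ℝ} (hu : 0 ≤ u) (hyu : y = u + 2) :
    1 / (4 * (u + 1) * (u + 2)) ≤ 1 / y ^ 2 := by
  subst hyu
  rw [div_le_div_iff₀ (by positivity) (by positivity)]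
  nlinarith

/-- **Tail bound for the inverse Dirichlet Laplacian in coefficient space.**
If `T` is the bounded operator on `ℓ¹(ℕ,ℝ)` acting on basis vectors as the tridiagonal
coefficient representation of `Δ₀⁻¹` with azimuthal wave number `m`, and `π^∞` is the
projection killing all coordinates of index `≤ N`, then
`‖π^∞ ∘ T‖ ≤ 1/(2(N+1)+m)²`. -/
theorem tail_inverse_laplacian_norm_bound (m N : ℕ)
    (T : lp (fun _ : ℕ => ℝ) 1 →L[ℝ] lp (fun _ : ℕ => ℝ) 1)
    (hT0 : T (lp.single 1 0 1) =
      (1 / (4 * ((m : ℝ) + 1) * ((m : ℝ) + 2))) • lp.single 1 1 1 -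
        (1 / (4 * ((m : ℝ) + 1) * ((m : ℝ) + 2))) • lp.single 1 0 1)
    (hTn : ∀ n : ℕ, 1 ≤ n → T (lp.single 1 n 1) =
      (1 / (4 * (2 * (n : ℝ) + m + 1) * (2 * (n : ℝ) + m + 2))) • lp.single 1 (n + 1) 1 -
        (1 / (2 * (2 * (n : ℝ) + m + 2) * (2 * (n : ℝ) + m))) • lp.single 1 n 1 +
        (1 / (4 * (2 * (n : ℝ) + m) * (2 * (n : ℝ) + m + 1))) • lp.single 1 (n - 1) 1)
    (P : lp (fun _ : ℕ => ℝ) 1 →L[ℝ] lp (fun _ : ℕ => ℝ) 1)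
    (hP : ∀ (a : lp (fun _ : ℕ => ℝ) 1) (i : ℕ),
      (P a : ∀ _ : ℕ, ℝ) i = if i ≤ N then 0 else (a : ∀ _ : ℕ, ℝ) i) :
    ‖P.comp T‖ ≤ 1 / (2 * ((N : ℝ) + 1) + m) ^ 2 := by
  have hy2 : (2:ℝ) ≤ 2 * ((N : ℝ) + 1) + m := by
    nlinarith [Nat.cast_nonneg (α := ℝ) N, Nat.cast_nonneg (α := ℝ) m]
  have hy0 : (0:ℝ) < 2 * ((N : ℝ) + 1) + m := by linarith
  have hC : (0:ℝ) ≤ 1 / (2 * ((N : ℝ) + 1) + m) ^ 2 := by positivity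
  -- images of singles under P
  have hPs : ∀ (j : ℕ) (c : ℝ), P (lp.single 1 j c) =
      if N < j then lp.single 1 j c else 0 := by
    intro j c
    refine lp.ext (funext fun i => ?_)
    rw [hP]
    by_cases hi : i ≤ N
    · by_cases hj : N < j
      · have hij : i ≠ j := by omega
        simp [hi, hj, Pi.single_apply, hij, lp.single_apply_ne (E := fun _ : ℕ => ℝ) 1 j c hij]
      · simp [hi, hj]
    · by_cases hj : N < j
      · simp [hi, hj]
      · have hij : i ≠ j := by omega
        simp [hi, hj, Pi.single_apply, hij, lp.single_apply_ne (E := fun _ : ℕ => ℝ) 1 j c hij]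
  have hPn : ∀ j : ℕ, ‖P (lp.single 1 j (1:ℝ))‖ = if N < j then 1 else 0 := by
    intro j
    rw [hPs]
    split
    · simpa using lp.norm_single (E := fun _ : ℕ => ℝ) (p := 1) (by norm_num)
        (fun _ => (1:ℝ)) j
    · simp
  refine col_bound _ hC fun n => ?_
  rcases Nat.eq_zero_or_pos n with rfl | hn
  · -- column 0
    rw [ContinuousLinearMap.comp_apply, hT0, map_sub, map_smul, map_smul]
    have hb : ‖(1 / (4 * ((m : ℝ) + 1) * ((m : ℝ) + 2))) • P (lp.single 1 1 (1:ℝ)) -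
        (1 / (4 * ((m : ℝ) + 1) * ((m : ℝ) + 2))) • P (lp.single 1 0 (1:ℝ))‖ ≤
        |1 / (4 * ((m : ℝ) + 1) * ((m : ℝ) + 2))| * ‖P (lp.single 1 1 (1:ℝ))‖ +
        |1 / (4 * ((m : ℝ) + 1) * ((m : ℝ) + 2))| * ‖P (lp.single 1 0 (1:ℝ))‖ := by
      refine (norm_sub_le _ _).trans ?_
      simp only [norm_smul, Real.norm_eq_abs]
      exact le_rfl
    refine hb.trans ?_
    rw [hPn, hPn]
    have h0 : ¬ (N < 0) := by omega
    rw [if_neg h0, mul_zero, add_zero]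
    by_cases hN : N < 1
    · have hN0 : N = 0 := by omega
      subst hN0
      rw [if_pos hN, mul_one, abs_of_nonneg (by positivity)]
      have := arith3 (u := (m:ℝ)) (y := 2 * ((0:ℕ) + (1:ℝ)) + m) (Nat.cast_nonneg m)
        (by push_cast; ring)
      simpa using this
    · rw [if_neg hN, mul_zero]
      exact hC
  · -- column n ≥ 1
    rw [ContinuousLinearMap.comp_apply, hTn n hn, map_add, map_sub, map_smul, map_smul, map_smul]
    have hu2 : (2:ℝ) ≤ 2 * (n : ℝ) + m := by
      have h1 : (1:ℝ) ≤ (n:ℝ) := by exact_mod_cast hn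
      nlinarith [Nat.cast_nonneg (α := ℝ) m]
    have hu0 : (0:ℝ) < 2 * (n : ℝ) + m := by linarith
    have htri : ‖(1 / (4 * (2 * (n : ℝ) + m + 1) * (2 * (n : ℝ) + m + 2))) •
          P (lp.single 1 (n + 1) (1:ℝ)) -
        (1 / (2 * (2 * (n : ℝ) + m + 2) * (2 * (n : ℝ) + m))) • P (lp.single 1 n (1:ℝ)) +
        (1 / (4 * (2 * (n : ℝ) + m) * (2 * (n : ℝ) + m + 1))) • P (lp.single 1 (n - 1) (1:ℝ))‖ ≤
        |1 / (4 * (2 * (n : ℝ) + m + 1) * (2 * (n : ℝ) + m + 2))| *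
          ‖P (lp.single 1 (n + 1) (1:ℝ))‖ +
        |1 / (2 * (2 * (n : ℝ) + m + 2) * (2 * (n : ℝ) + m))| * ‖P (lp.single 1 n (1:ℝ))‖ +
        |1 / (4 * (2 * (n : ℝ) + m) * (2 * (n : ℝ) + m + 1))| *
          ‖P (lp.single 1 (n - 1) (1:ℝ))‖ := by
      refine (norm_add_le _ _).trans ?_
      have h := norm_sub_le
        ((1 / (4 * (2 * (n : ℝ) + m + 1) * (2 * (n : ℝ) + m + 2))) •
          P (lp.single 1 (n + 1) (1:ℝ)))
        ((1 / (2 * (2 * (n : ℝ) + m + 2) * (2 * (n : ℝ) + m))) • P (lp.single 1 n (1:ℝ)))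
      simp only [norm_smul, Real.norm_eq_abs] at h ⊢
      linarith
    refine htri.trans ?_
    rw [hPn, hPn, hPn,
      abs_of_nonneg (a := 1 / (4 * (2 * (n : ℝ) + m + 1) * (2 * (n : ℝ) + m + 2)))
        (by positivity),
      abs_of_nonneg (a := 1 / (2 * (2 * (n : ℝ) + m + 2) * (2 * (n : ℝ) + m))) (by positivity),
      abs_of_nonneg (a := 1 / (4 * (2 * (n : ℝ) + m) * (2 * (n : ℝ) + m + 1))) (by positivity)]
    have ha0 : (0:ℝ) ≤ 1 / (4 * (2 * (n : ℝ) + m + 1) * (2 * (n : ℝ) + m + 2)) := by positivity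
    have hb0 : (0:ℝ) ≤ 1 / (2 * (2 * (n : ℝ) + m + 2) * (2 * (n : ℝ) + m)) := by positivity
    have hd0 : (0:ℝ) ≤ 1 / (4 * (2 * (n : ℝ) + m) * (2 * (n : ℝ) + m + 1)) := by positivity
    rcases lt_trichotomy n N with h1 | h1 | h1
    · -- n < N : everything killed
      have e1 : ¬ N < n + 1 := by omega
      have e2 : ¬ N < n := by omega
      have e3 : ¬ N < n - 1 := by omega
      rw [if_neg e1, if_neg e2, if_neg e3, mul_zero, mul_zero, mul_zero]
      simpa using hC
    · -- n = N : only the superdiagonal survives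
      subst h1
      have e1 : n < n + 1 := by omega
      have e2 : ¬ n < n := by omega
      have e3 : ¬ n < n - 1 := by omega
      rw [if_pos e1, if_neg e2, if_neg e3, mul_zero, mul_zero, mul_one, add_zero, add_zero]
      exact arith3 (u := 2 * (n:ℝ) + m) (by linarith) (by ring)
    · -- n > N
      have hyu : 2 * ((N : ℝ) + 1) + m ≤ 2 * (n : ℝ) + m := by
        have : (N:ℝ) + 1 ≤ (n:ℝ) := by exact_mod_cast h1
        linarith
      have key := arith1 hu2 hy2 hyu
      have e1 : N < n + 1 := by omega
      have e2 : N < n := by omega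
      rw [if_pos e1, if_pos e2, mul_one, mul_one]
      by_cases e3 : N < n - 1
      · rw [if_pos e3, mul_one]
        exact key
      · rw [if_neg e3, mul_zero, add_zero]
        linarith
end

section
/- Fix integers k ≥ 0 and m ≥ 1, and let R⁻_{k,m} : ℓ¹(ℕ,ℝ) → ℓ¹(ℕ,ℝ) be the bounded linear operator determined on the standard basis vectors by R⁻_{k,m} e_n = ((n+m)/(2n+k+m+1)) e_n + ((n+1)/(2n+k+m+1)) e_{n+1}. Then for k = 0 the ℓ¹ operator norm of R⁻_{0,m} equals 1; consequently, for every m ≥ 1, the composition R⁻_{0,1} ∘ R⁻_{0,2} ∘ ⋯ ∘ R⁻_{0,m} (representing multiplication by z̄^m on Zernike coefficients) has ℓ¹ operator norm at most 1. -/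
open scoped ENNReal

/-- `compUpTo R m = R 1 ∘ R 2 ∘ ⋯ ∘ R m` (the identity for `m = 0`). -/
noncomputable def compUpTo {E : Type*} [NormedAddCommGroup E] [NormedSpace ℝ E]
    (R : ℕ → E →L[ℝ] E) : ℕ → E →L[ℝ] E
  | 0 => ContinuousLinearMap.id ℝ E
  | n + 1 => (compUpTo R n).comp (R (n + 1))

lemma single_apply_ne' (i : ℕ) {j : ℕ} (h : j ≠ i) :
    (lp.single (E := fun _ : ℕ => ℝ) 1 i 1 : ∀ _ : ℕ, ℝ) j = 0 :=
  lp.single_apply_ne (E := fun _ : ℕ => ℝ) 1 i 1 h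

lemma two_single_norm (n : ℕ) (a b : ℝ) :
    ‖a • lp.single (E := fun _ : ℕ => ℝ) 1 n 1 + b • lp.single 1 (n+1) 1‖ = |a| + |b| := by
  have hp : (0:ℝ) < (1 : ℝ≥0∞).toReal := by norm_num
  set g := a • lp.single (E := fun _ : ℕ => ℝ) 1 n 1 + b • lp.single 1 (n+1) 1 with hg
  have hgn : (g : ∀ _ : ℕ, ℝ) n = a := by
    rw [hg, lp.coeFn_add, lp.coeFn_smul, lp.coeFn_smul]
    erw [Pi.add_apply, Pi.smul_apply, Pi.smul_apply]
    simp [lp.coeFn_single, Pi.single_apply]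
  have hgn1 : (g : ∀ _ : ℕ, ℝ) (n+1) = b := by
    rw [hg, lp.coeFn_add, lp.coeFn_smul, lp.coeFn_smul]
    erw [Pi.add_apply, Pi.smul_apply, Pi.smul_apply]
    simp [lp.coeFn_single, Pi.single_apply]
  have hzero : ∀ i ∉ ({n, n+1} : Finset ℕ), ‖(g : ∀ _ : ℕ, ℝ) i‖ ^ (1 : ℝ≥0∞).toReal = 0 := by
    intro i hi
    simp only [Finset.mem_insert, Finset.mem_singleton, not_or] at hi
    rw [hg, lp.coeFn_add, lp.coeFn_smul, lp.coeFn_smul]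
    erw [Pi.add_apply, Pi.smul_apply, Pi.smul_apply]
    simp [lp.coeFn_single, Pi.single_apply, hi.1, hi.2]
  rw [lp.norm_eq_tsum_rpow hp, tsum_eq_sum hzero]
  rw [Finset.sum_pair (by omega : n ≠ n+1)]
  rw [hgn, hgn1]
  simp [Real.norm_eq_abs]

lemma contract_of_single (T : lp (fun _ : ℕ => ℝ) 1 →L[ℝ] lp (fun _ : ℕ => ℝ) 1)
    (h1 : ∀ n, ‖T (lp.single 1 n 1)‖ = 1) (x : lp (fun _ : ℕ => ℝ) 1) : ‖T x‖ ≤ ‖x‖ := by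
  have hp : (0:ℝ) < (1 : ℝ≥0∞).toReal := by norm_num
  have hsum : HasSum (fun n => lp.single 1 n ((x : ∀ _ : ℕ, ℝ) n)) x :=
    lp.hasSum_single (by norm_num) x
  have hTsum : HasSum (fun n => T (lp.single 1 n ((x : ∀ _ : ℕ, ℝ) n))) (T x) :=
    hsum.mapL T
  have hnorm : ∀ n, ‖T (lp.single 1 n ((x : ∀ _ : ℕ, ℝ) n))‖ = ‖(x : ∀ _ : ℕ, ℝ) n‖ := by
    intro n
    have h2 : lp.single (E := fun _ : ℕ => ℝ) 1 n ((x : ∀ _ : ℕ, ℝ) n)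
        = (x : ∀ _ : ℕ, ℝ) n • lp.single 1 n 1 := by
      rw [← lp.single_smul]
      norm_num
    rw [h2, map_smul, norm_smul, h1 n, mul_one]
  have hx : HasSum (fun n => ‖(x : ∀ _ : ℕ, ℝ) n‖) ‖x‖ := by
    have := lp.hasSum_norm hp x
    simpa using this
  have hx' : HasSum (fun n => ‖T (lp.single 1 n ((x : ∀ _ : ℕ, ℝ) n))‖) ‖x‖ := by
    simpa only [hnorm] using hx
  calc ‖T x‖ ≤ ∑' n, ‖T (lp.single 1 n ((x : ∀ _ : ℕ, ℝ) n))‖ := by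
        rw [← hTsum.tsum_eq]
        exact norm_tsum_le_tsum_norm hx'.summable
    _ = ‖x‖ := hx'.tsum_eq

/-- **Norm of the multiplication-by-`z̄` operators in coefficient space.**
If `R k m` is the bounded operator on `ℓ¹(ℕ,ℝ)` acting on basis vectors by
`R⁻_{k,m} e_n = ((n+m)/(2n+k+m+1)) e_n + ((n+1)/(2n+k+m+1)) e_{n+1}` (for `m ≥ 1`),
then `‖R⁻_{0,m}‖ = 1` for every `m ≥ 1`, and consequently the composition
`R⁻_{0,1} ∘ R⁻_{0,2} ∘ ⋯ ∘ R⁻_{0,m}` — representing multiplication by `z̄^m` on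
Zernike coefficients — has `ℓ¹` operator norm at most `1`. -/
theorem rminus_norm (R : ℕ → ℕ → (lp (fun _ : ℕ => ℝ) 1 →L[ℝ] lp (fun _ : ℕ => ℝ) 1))
    (hR : ∀ k m : ℕ, 1 ≤ m → ∀ n : ℕ,
      R k m (lp.single 1 n 1) =
        (((n : ℝ) + m) / (2 * (n : ℝ) + k + m + 1)) • lp.single 1 n 1 +
          (((n : ℝ) + 1) / (2 * (n : ℝ) + k + m + 1)) • lp.single 1 (n + 1) 1) :
    (∀ m : ℕ, 1 ≤ m → ‖R 0 m‖ = 1) ∧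
    (∀ m : ℕ, 1 ≤ m → ‖compUpTo (R 0) m‖ ≤ 1) := by
  have hp : (0:ℝ) < (1 : ℝ≥0∞).toReal := by norm_num
  have h1 : ∀ m : ℕ, 1 ≤ m → ∀ n : ℕ, ‖R 0 m (lp.single 1 n 1)‖ = 1 := by
    intro m hm n
    rw [hR 0 m hm n, two_single_norm]
    have hd : (0:ℝ) < 2 * (n : ℝ) + (0:ℕ) + m + 1 := by
      have : (1:ℝ) ≤ (m:ℝ) := by exact_mod_cast hm
      positivity
    rw [abs_of_nonneg (by positivity), abs_of_nonneg (by positivity)]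
    field_simp
    ring
  have hle : ∀ m : ℕ, 1 ≤ m → ‖R 0 m‖ ≤ 1 := by
    intro m hm
    refine (R 0 m).opNorm_le_bound zero_le_one fun x => ?_
    rw [one_mul]
    exact contract_of_single (R 0 m) (h1 m hm) x
  have hone : ∀ m : ℕ, 1 ≤ m → ‖R 0 m‖ = 1 := by
    intro m hm
    refine le_antisymm (hle m hm) ?_
    have he : ‖lp.single (E := fun _ : ℕ => ℝ) 1 0 (1:ℝ)‖ = 1 := by
      have := lp.norm_single (E := fun _ : ℕ => ℝ) (by norm_num : (0:ℝ≥0∞) < 1) 0 (1:ℝ)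
      simpa using this
    have := (R 0 m).le_opNorm (lp.single 1 0 1)
    rw [h1 m hm 0, he, mul_one] at this
    exact this
  refine ⟨hone, ?_⟩
  have hall : ∀ m : ℕ, ‖compUpTo (R 0) m‖ ≤ 1 := by
    intro m
    induction m with
    | zero => simpa [compUpTo] using ContinuousLinearMap.norm_id_le
    | succ n ih =>
      calc ‖compUpTo (R 0) (n+1)‖ ≤ ‖compUpTo (R 0) n‖ * ‖R 0 (n+1)‖ :=
            ContinuousLinearMap.opNorm_comp_le _ _
        _ ≤ 1 * 1 := mul_le_mul ih (hle (n+1) (by omega)) (norm_nonneg _) zero_le_one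
        _ = 1 := one_mul 1
  exact fun m _ => hall m
end
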